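/- Let G be a connected simple graph on n ≥ 3 vertices. Then v(G) ≤ ⌊(n−1)/2⌋, where v(G) is the minimum cardinality of an independent set A of G such that N_G(A) is a vertex cover of G. -/

import Mathlib

/-!
Let `A` be a smallest independent set whose neighbourhood is a vertex cover, `|A| = v(G)`.
By minimality every `a ∈ A` has a private neighbour: a vertex outside `A` whose only neighbour
in `A` is `a`. These are distinct, so `2 v(G) ≤ n`. If `2 v(G) = n` they exhaust `V ∖ A`, and
since `G` is connected and `v(G) ≥ 2`, `V ∖ A` cannot be independent (else `G` would be a perfect
matching). A maximal independent subset `S` of `V ∖ A` is then proper and dominates `V ∖ A`, so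
`N(S)` is a vertex cover and `v(G) ≤ |S| < n - v(G) = v(G)`.
-/

open MvPolynomial

namespace PaperRV

variable {V : Type*}

/-- `A` is an independent set of `G`. -/
def IsIndep (G : SimpleGraph V) (A : Set V) : Prop :=
  ∀ u ∈ A, ∀ v ∈ A, ¬ G.Adj u v

/-- The neighbourhood `N_G(A)` of a set of vertices `A`. -/
def nbhd (G : SimpleGraph V) (A : Set V) : Set V :=
  {v | ∃ u ∈ A, G.Adj u v}

/-- `C` is a vertex cover of `G`. -/
def IsVertexCover (G : SimpleGraph V) (C : Set V) : Prop :=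
  ∀ ⦃u v⦄, G.Adj u v → u ∈ C ∨ v ∈ C

/-- The v-number of (the edge ideal of) `G`: the minimum cardinality of an independent
set `A` such that `N_G(A)` is a vertex cover of `G`. -/
noncomputable def vNumber (G : SimpleGraph V) [Fintype V] : ℕ :=
  sInf {k | ∃ A : Finset V, IsIndep G ↑A ∧ IsVertexCover G (nbhd G ↑A) ∧ A.card = k}

section Lemmas

variable {G : SimpleGraph V}

lemma IsIndep.mono {S T : Set V} (hT : IsIndep G T) (hST : S ⊆ T) : IsIndep G S :=
  fun u hu v hv => hT u (hST hu) v (hST hv)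

lemma IsIndep.insert {S : Set V} {x : V} (hS : IsIndep G S) (hx : x ∉ nbhd G S) :
    IsIndep G (insert x S) := by
  rintro u (rfl | hu) v (rfl | hv) huv
  · exact G.irrefl huv
  · exact hx ⟨v, hv, huv.symm⟩
  · exact hx ⟨u, hu, huv⟩
  · exact hS u hu v hv huv

lemma IsVertexCover.mono {C D : Set V} (hC : IsVertexCover G C) (hCD : C ⊆ D) :
    IsVertexCover G D :=
  fun _ _ huv => (hC huv).imp (@hCD _) (@hCD _)

/-- An edge meets `Iᶜ`, and its endpoint there is either in `S`, making the other endpoint a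
neighbour of `S`, or is itself a neighbour of `S`. -/
lemma isVertexCover_nbhd_of_dominating {I S : Set V} (hI : IsIndep G I)
    (hdom : ∀ x, x ∉ I → x ∉ S → x ∈ nbhd G S) : IsVertexCover G (nbhd G S) := by
  have key : ∀ ⦃x y⦄, G.Adj x y → x ∉ I → x ∈ nbhd G S ∨ y ∈ nbhd G S := fun x y hxy hx => by
    by_cases hxS : x ∈ S
    · exact Or.inr ⟨x, hxS, hxy⟩
    · exact Or.inl (hdom x hx hxS)
  intro x y hxy
  by_cases hx : x ∈ I
  · have hy : y ∉ I := fun hy => hI x hx y hy hxy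
    exact (key hxy.symm hy).symm
  · exact key hxy hx

lemma exists_indep_subset_dominating (G : SimpleGraph V) (B : Finset V) :
    ∃ S ⊆ B, IsIndep G ↑S ∧ ∀ x ∈ B, x ∉ S → x ∈ nbhd G ↑S := by
  classical
  have hne : (B.powerset.filter fun S : Finset V => IsIndep G ↑S).Nonempty :=
    ⟨∅, by simp [IsIndep]⟩
  obtain ⟨S, hS, hmax⟩ := Finset.exists_max_image _ Finset.card hne
  rw [Finset.mem_filter, Finset.mem_powerset] at hS
  refine ⟨S, hS.1, hS.2, fun x hxB hxS => by_contra fun hx => ?_⟩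
  have hins : insert x S ∈ B.powerset.filter fun S : Finset V => IsIndep G ↑S := by
    rw [Finset.mem_filter, Finset.mem_powerset, Finset.coe_insert]
    exact ⟨Finset.insert_subset hxB hS.1, hS.2.insert hx⟩
  have := hmax _ hins
  rw [Finset.card_insert_of_notMem hxS] at this
  omega

lemma vNumber_le [Fintype V] {A : Finset V} (hA : IsIndep G ↑A)
    (hcov : IsVertexCover G (nbhd G ↑A)) : vNumber G ≤ A.card :=
  Nat.sInf_le ⟨A, hA, hcov, rfl⟩

lemma exists_card_eq_vNumber (G : SimpleGraph V) [Fintype V] :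
    ∃ A : Finset V, IsIndep G ↑A ∧ IsVertexCover G (nbhd G ↑A) ∧ A.card = vNumber G := by
  classical
  obtain ⟨S, -, hS, hdom⟩ := exists_indep_subset_dominating G Finset.univ
  have hcov : IsVertexCover G (nbhd G ↑S) :=
    isVertexCover_nbhd_of_dominating (I := ∅) (by simp [IsIndep])
      fun x _ hx => hdom x (Finset.mem_univ x) hx
  exact Nat.sInf_mem (s := {k | ∃ A : Finset V, IsIndep G ↑A ∧ IsVertexCover G (nbhd G ↑A) ∧
    A.card = k}) ⟨S.card, S, hS, hcov, rfl⟩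

def IsPrivateNeighborMap (G : SimpleGraph V) (A : Finset V) (u : V → V) : Prop :=
  ∀ a ∈ A, G.Adj a (u a) ∧ ∀ b ∈ A, G.Adj b (u a) → b = a

/-- Without a private neighbour of `a`, every neighbour of `A` is already one of `A.erase a`. -/
lemma exists_private_neighbor [DecidableEq V] {A : Finset V} {a : V}
    (hcov : IsVertexCover G (nbhd G ↑A)) (herase : ¬ IsVertexCover G (nbhd G ↑(A.erase a))) :
    ∃ w, G.Adj a w ∧ ∀ b ∈ A, G.Adj b w → b = a := by
  by_contra! hno
  refine herase (hcov.mono ?_)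
  rintro w ⟨b, hb, hbw⟩
  by_cases hba : b = a
  · obtain ⟨c, hc, hcw, hca⟩ := hno w (hba ▸ hbw)
    exact ⟨c, Finset.mem_erase.mpr ⟨hca, hc⟩, hcw⟩
  · exact ⟨b, Finset.mem_erase.mpr ⟨hba, hb⟩, hbw⟩

lemma exists_isPrivateNeighborMap [Fintype V] {A : Finset V} (hA : IsIndep G ↑A)
    (hcov : IsVertexCover G (nbhd G ↑A)) (hcard : A.card = vNumber G) :
    ∃ u, IsPrivateNeighborMap G A u := by
  classical
  have hprivate : ∀ a ∈ A, ∃ w, G.Adj a w ∧ ∀ b ∈ A, G.Adj b w → b = a := by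
    intro a ha
    refine exists_private_neighbor hcov fun herase => ?_
    have hle := vNumber_le (hA.mono (Finset.coe_subset.mpr (A.erase_subset a))) herase
    rw [Finset.card_erase_of_mem ha] at hle
    have := Finset.card_pos.mpr ⟨a, ha⟩
    omega
  choose! u hu using hprivate
  exact ⟨u, hu⟩

lemma vNumber_lt_card_compl [Fintype V] [DecidableEq V] {A : Finset V} (hA : IsIndep G ↑A)
    (hAc : ¬ IsIndep G ↑Aᶜ) : vNumber G < Aᶜ.card := by
  obtain ⟨S, hSA, hS, hdom⟩ := exists_indep_subset_dominating G Aᶜ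
  have hcov : IsVertexCover G (nbhd G ↑S) :=
    isVertexCover_nbhd_of_dominating hA fun x hx => hdom x (by simpa using hx)
  have hssub : S ⊂ Aᶜ := Finset.ssubset_iff_subset_ne.mpr ⟨hSA, by rintro rfl; exact hAc hS⟩
  exact (vNumber_le hS hcov).trans_lt (Finset.card_lt_card hssub)

end Lemmas

namespace IsPrivateNeighborMap

variable {G : SimpleGraph V} {A : Finset V} {u : V → V}

lemma notMem (hA : IsIndep G ↑A) (hu : IsPrivateNeighborMap G A u) {a : V} (ha : a ∈ A) :
    u a ∉ A :=
  fun hua => hA a ha (u a) hua (hu a ha).1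

lemma injOn (hu : IsPrivateNeighborMap G A u) : Set.InjOn u ↑A := by
  intro a ha b hb hab
  exact ((hu a ha).2 b hb (hab ▸ (hu b hb).1)).symm

lemma image_subset_compl [Fintype V] [DecidableEq V] (hA : IsIndep G ↑A)
    (hu : IsPrivateNeighborMap G A u) : A.image u ⊆ Aᶜ := by
  intro x hx
  obtain ⟨a, ha, rfl⟩ := Finset.mem_image.mp hx
  exact Finset.mem_compl.mpr (hu.notMem hA ha)

lemma card_le_card_compl [Fintype V] [DecidableEq V] (hA : IsIndep G ↑A)
    (hu : IsPrivateNeighborMap G A u) : A.card ≤ Aᶜ.card := by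
  rw [← Finset.card_image_of_injOn hu.injOn]
  exact Finset.card_le_card (hu.image_subset_compl hA)

lemma image_eq_compl [Fintype V] [DecidableEq V] (hA : IsIndep G ↑A)
    (hu : IsPrivateNeighborMap G A u) (hcard : Aᶜ.card ≤ A.card) : A.image u = Aᶜ := by
  refine Finset.eq_of_subset_of_card_le (hu.image_subset_compl hA) ?_
  rwa [Finset.card_image_of_injOn hu.injOn]

/-- If the private neighbours exhaust `Aᶜ` and `Aᶜ` were independent, then `a` and `u a` would
be adjacent only to each other, so `{a, u a}` would be a whole component of `G`. -/
lemma not_isIndep_compl [Fintype V] [DecidableEq V] (hA : IsIndep G ↑A)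
    (hu : IsPrivateNeighborMap G A u) (hsurj : A.image u = Aᶜ) (hG : G.Connected)
    (hcard : 1 < A.card) : ¬ IsIndep G ↑Aᶜ := by
  intro hind
  obtain ⟨a, ha, a', ha', hne⟩ := Finset.one_lt_card.mp hcard
  have hua : u a ∉ A := hu.notMem hA ha
  have ha'C : a' ∉ ({a, u a} : Set V) := by
    rintro (h | h)
    exacts [hne h.symm, hua (h ▸ ha')]
  obtain ⟨d, -, hx, hy⟩ :=
    (hG.preconnected a a').some.exists_boundary_dart {a, u a} (by simp) ha'C
  have hxy := d.adj
  rcases hx with hx | hx <;> rw [hx] at hxy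
  · have hyA : d.snd ∉ A := fun h => hA a ha _ h hxy
    obtain ⟨b, hb, hby⟩ := Finset.mem_image.mp (hsurj ▸ Finset.mem_compl.mpr hyA)
    rw [← hby, (hu b hb).2 a ha (hby ▸ hxy)] at hy
    exact hy (Or.inr rfl)
  · by_cases hyA : d.snd ∈ A
    · exact hy (Or.inl ((hu a ha).2 _ hyA hxy.symm))
    · exact hind _ (by simpa using hua) _ (by simpa using hyA) hxy

end IsPrivateNeighborMap

/-- For a connected graph `G` on `n ≥ 3` vertices, `v(G) ≤ ⌊(n - 1) / 2⌋`. -/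
theorem stmt2 {V : Type*} [Fintype V] (G : SimpleGraph V) (hn : 3 ≤ Fintype.card V)
    (hG : G.Connected) :
    vNumber G ≤ (Fintype.card V - 1) / 2 := by
  classical
  obtain ⟨A, hA, hcov, hcard⟩ := exists_card_eq_vNumber G
  obtain ⟨u, hu⟩ := exists_isPrivateNeighborMap hA hcov hcard
  have hcompl : Aᶜ.card = Fintype.card V - A.card := Finset.card_compl A
  have hle := hu.card_le_card_compl hA
  by_contra! hlt
  have hAc : ¬ IsIndep G ↑Aᶜ :=
    hu.not_isIndep_compl hA (hu.image_eq_compl hA (by omega)) hG (by omega)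
  have := vNumber_lt_card_compl hA hAc
  omega

end PaperRV
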